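/- Let α be a nonnegative random variable with finite expectation and continuous CDF F, let T ≥ 0, c ≥ 0, and set k = 3T + c, r_H = α_H − k where α_H is the essential supremum of α; assume r_H > 0. Define U(r) = (2/3)·r·E[(α − k − r)⁺]. Then U is continuously differentiable on (0, r_H), and for r ∈ (0, r_H): U(r) = (2/3)·r·m(k + r)·(1 − F(k + r)), and U'(r) = (2/3)·(m(k + r) − r)·(1 − F(k + r)). Consequently every r ∈ (0, r_H) with U'(r) = 0 satisfies r = m(k + r). -/

import Mathlib

/-!
Write `S(t) = E[(α − t)⁺]`. Since `x ↦ (x − t)⁺` is 1-Lipschitz in `t` with derivative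
`−1_{x > t}` off the atom `x = t`, dominated differentiation gives `S'(t) = −P(α > t)` when `α`
has no atoms. By definition `m(t)·P(α > t) = S(t)`, and `P(α > t) > 0` for `t < α_H`, so on
`(0, r_H)` the payoff `U(r) = (2/3)·r·S(k + r)` has derivative
`(2/3)·(S(k + r) − r·P(α > k + r)) = (2/3)·(m(k + r) − r)·(1 − F(k + r))`, which vanishes only
where `m(k + r) = r`. Continuity comes from that of `F` (no atoms) and of `S`.
-/

open MeasureTheory Set

/-- The cumulative distribution function of a distribution `μ` on `ℝ`. -/
noncomputable def cdfR (μ : Measure ℝ) (t : ℝ) : ℝ := (μ (Iic t)).toReal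

/-- The mean residual lifetime function `m(t) = E[α − t ∣ α > t]` (with value `0` when
`P(α > t) = 0`, using the junk-value convention `x / 0 = 0`). -/
noncomputable def mrl (μ : Measure ℝ) (t : ℝ) : ℝ :=
  (∫ x, max (x - t) 0 ∂μ) / (μ (Ioi t)).toReal

open Filter ProbabilityTheory

lemma continuous_cdfR (μ : Measure ℝ) [IsProbabilityMeasure μ] (hμ : ∀ t : ℝ, μ {t} = 0) :
    Continuous (cdfR μ) := by
  have hcdf : cdfR μ = cdf μ := funext fun t => (cdf_eq_real μ t).symm
  refine hcdf ▸ continuous_iff_continuousAt.2 fun t => ?_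
  rw [(cdf μ).mono.continuousAt_iff_leftLim_eq_rightLim, (cdf μ).rightLim_eq]
  have hjump : ENNReal.ofReal (cdf μ t - Function.leftLim (cdf μ) t) = 0 := by
    rw [← StieltjesFunction.measure_singleton, measure_cdf, hμ]
  linarith [(cdf μ).mono.leftLim_le (le_refl t), ENNReal.ofReal_eq_zero.1 hjump]

lemma one_sub_cdfR (μ : Measure ℝ) [IsProbabilityMeasure μ] (t : ℝ) :
    1 - cdfR μ t = μ.real (Ioi t) := by
  rw [← compl_Iic, probReal_compl_eq_one_sub measurableSet_Iic, cdfR, measureReal_def]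

lemma measureReal_Ioi_pos_of_lt_essSup (μ : Measure ℝ) [IsFiniteMeasure μ] {t : ℝ}
    (ht : (t : EReal) < essSup (fun x : ℝ => (x : EReal)) μ) : 0 < μ.real (Ioi t) := by
  refine ENNReal.toReal_pos (fun hzero => ht.not_ge (essSup_le_of_ae_le _ ?_)) (measure_ne_top μ _)
  filter_upwards [measure_eq_zero_iff_ae_notMem.1 hzero] with x hx
  simpa using hx

noncomputable def stopLoss (μ : Measure ℝ) (t : ℝ) : ℝ := ∫ x, max (x - t) 0 ∂μ

lemma integrable_posPart_sub {μ : Measure ℝ} [IsFiniteMeasure μ] (hint : Integrable id μ)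
    (t : ℝ) : Integrable (fun x => max (x - t) 0) μ :=
  (hint.sub (integrable_const t)).pos_part

lemma lipschitzWith_posPart_const_sub (a : ℝ) : LipschitzWith 1 fun s : ℝ => max (a - s) 0 :=
  (LipschitzWith.of_dist_le_mul fun x y => by
    rw [Real.dist_eq, Real.dist_eq, NNReal.coe_one, one_mul, abs_sub_comm x,
      sub_sub_sub_cancel_left]).max_const 0

lemma hasDerivAt_posPart_const_sub {a t : ℝ} (h : a ≠ t) :
    HasDerivAt (fun s : ℝ => max (a - s) 0) ((Ioi t).indicator (fun _ => -1) a) t := by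
  rcases h.lt_or_gt with h | h
  · rw [indicator_of_notMem (notMem_Ioi.2 h.le)]
    refine (hasDerivAt_const t 0).congr_of_eventuallyEq ?_
    filter_upwards [Ioi_mem_nhds h] with s hs
    exact max_eq_right (by linarith [mem_Ioi.1 hs])
  · rw [indicator_of_mem (mem_Ioi.2 h)]
    refine ((hasDerivAt_id t).const_sub a).congr_of_eventuallyEq ?_
    filter_upwards [Iio_mem_nhds h] with s hs
    exact max_eq_left (by linarith [mem_Iio.1 hs])

lemma hasDerivAt_stopLoss {μ : Measure ℝ} [IsFiniteMeasure μ] (hint : Integrable id μ)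
    {t : ℝ} (ht : μ {t} = 0) : HasDerivAt (stopLoss μ) (-μ.real (Ioi t)) t := by
  have hne : ∀ᵐ x ∂μ, x ≠ t := measure_eq_zero_iff_ae_notMem.1 ht
  have key := hasDerivAt_integral_of_dominated_loc_of_lip (μ := μ)
    (F := fun s x => max (x - s) 0) (bound := fun _ => (1 : ℝ))
    (Metric.ball_mem_nhds t one_pos)
    (Eventually.of_forall fun s => (integrable_posPart_sub hint s).aestronglyMeasurable)
    (integrable_posPart_sub hint t)
    ((measurable_const.indicator measurableSet_Ioi).aestronglyMeasurable)
    (Eventually.of_forall fun x => by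
      simpa using (lipschitzWith_posPart_const_sub x).lipschitzOnWith)
    (integrable_const 1) (hne.mono fun x hx => hasDerivAt_posPart_const_sub hx)
  rw [integral_indicator_const _ measurableSet_Ioi, smul_neg, smul_eq_mul, mul_one] at key
  exact key.2

lemma mrl_mul_measureReal_Ioi {μ : Measure ℝ} {t : ℝ} (ht : μ.real (Ioi t) ≠ 0) :
    mrl μ t * μ.real (Ioi t) = stopLoss μ t :=
  div_mul_cancel₀ _ ht

lemma continuousOn_mrl {μ : Measure ℝ} [IsProbabilityMeasure μ] (hint : Integrable id μ)
    (hμ : ∀ t : ℝ, μ {t} = 0) : ContinuousOn (mrl μ) {t | 0 < μ.real (Ioi t)} := by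
  have hstop : Continuous (stopLoss μ) :=
    continuous_iff_continuousAt.2 fun t => (hasDerivAt_stopLoss hint (hμ t)).continuousAt
  have htail : Continuous fun t => μ.real (Ioi t) :=
    (continuous_const.sub (continuous_cdfR μ hμ)).congr (one_sub_cdfR μ)
  exact hstop.continuousOn.div htail.continuousOn fun t ht => ht.ne'

theorem stmt7_general (μ : Measure ℝ) [IsProbabilityMeasure μ]
    (hint : Integrable id μ) (hcont : ∀ t : ℝ, μ {t} = 0) (k : ℝ)
    (rH : EReal) (hrH : rH = essSup (fun x : ℝ => (x : EReal)) μ - (k : EReal))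
    (U : ℝ → ℝ) (hU : ∀ r : ℝ, U r = (2/3) * r * ∫ x, max (x - k - r) 0 ∂μ) :
    (∀ r : ℝ, 0 < r → (r : EReal) < rH →
      U r = (2/3) * r * mrl μ (k + r) * (1 - cdfR μ (k + r))) ∧
    (∀ r : ℝ, 0 < r → (r : EReal) < rH →
      HasDerivAt U ((2/3) * (mrl μ (k + r) - r) * (1 - cdfR μ (k + r))) r) ∧
    ContinuousOn (fun r : ℝ => (2/3) * (mrl μ (k + r) - r) * (1 - cdfR μ (k + r)))
      {r : ℝ | 0 < r ∧ (r : EReal) < rH} ∧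
    (∀ r : ℝ, 0 < r → (r : EReal) < rH → deriv U r = 0 → r = mrl μ (k + r)) := by
  have hUeq : U = fun r => (2/3) * r * stopLoss μ (k + r) := by
    ext r; simp only [hU, stopLoss, sub_sub]
  have htail : ∀ r : ℝ, (r : EReal) < rH → 0 < μ.real (Ioi (k + r)) := by
    intro r hr
    rw [hrH] at hr
    refine measureReal_Ioi_pos_of_lt_essSup μ ?_
    simpa [add_comm] using EReal.add_lt_of_lt_sub hr
  have hderiv : ∀ r : ℝ, (r : EReal) < rH →
      HasDerivAt U ((2/3) * (mrl μ (k + r) - r) * (1 - cdfR μ (k + r))) r := by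
    intro r hr
    have hd := ((hasDerivAt_id' r).const_mul (2/3 : ℝ)).mul
      ((hasDerivAt_stopLoss hint (hcont (k + r))).comp_const_add k r)
    rw [hUeq, one_sub_cdfR]
    refine hd.congr_deriv ?_
    linear_combination (-2/3 : ℝ) * mrl_mul_measureReal_Ioi (htail r hr).ne'
  refine ⟨fun r _ hr => ?_, fun r _ hr => hderiv r hr, ?_, fun r _ hr hzero => ?_⟩
  · rw [hUeq, one_sub_cdfR, mul_assoc _ (mrl μ _), mrl_mul_measureReal_Ioi (htail r hr).ne']
  · refine ContinuousOn.mul (continuousOn_const.mul (ContinuousOn.sub ?_ continuousOn_id))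
      (continuous_const.sub ((continuous_cdfR μ hcont).comp (continuous_const_add k))).continuousOn
    exact (continuousOn_mrl hint hcont).comp (continuous_const_add k).continuousOn
      fun r hr => htail r hr.2
  · rw [(hderiv r hr).deriv, one_sub_cdfR] at hzero
    have htail_ne := (htail r hr).ne'
    linarith [show mrl μ (k + r) - r = 0 by simpa [htail_ne] using hzero]

/-- With `k = 3T + c` and `r_H = α_H − k > 0`, the supplier payoff
`U(r) = (2/3)·r·E[(α − k − r)⁺]` is continuously differentiable on `(0, r_H)`, where
`U(r) = (2/3)·r·m(k+r)·(1 − F(k+r))` and `U'(r) = (2/3)·(m(k+r) − r)·(1 − F(k+r))`;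
hence every critical point `r ∈ (0, r_H)` of `U` satisfies `r = m(k + r)`. -/
theorem stmt7 (μ : Measure ℝ) [IsProbabilityMeasure μ]
    (hnonneg : μ (Iio 0) = 0) (hint : Integrable id μ) (hcont : ∀ t : ℝ, μ {t} = 0)
    (T c : ℝ) (hT : 0 ≤ T) (hc : 0 ≤ c) (k : ℝ) (hk : k = 3*T + c)
    (rH : EReal) (hrH : rH = essSup (fun x : ℝ => (x : EReal)) μ - (k : EReal))
    (hrHpos : 0 < rH)
    (U : ℝ → ℝ) (hU : ∀ r : ℝ, U r = (2/3) * r * ∫ x, max (x - k - r) 0 ∂μ) :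
    (∀ r : ℝ, 0 < r → (r : EReal) < rH →
      U r = (2/3) * r * mrl μ (k + r) * (1 - cdfR μ (k + r))) ∧
    (∀ r : ℝ, 0 < r → (r : EReal) < rH →
      HasDerivAt U ((2/3) * (mrl μ (k + r) - r) * (1 - cdfR μ (k + r))) r) ∧
    ContinuousOn (fun r : ℝ => (2/3) * (mrl μ (k + r) - r) * (1 - cdfR μ (k + r)))
      {r : ℝ | 0 < r ∧ (r : EReal) < rH} ∧
    (∀ r : ℝ, 0 < r → (r : EReal) < rH → deriv U r = 0 → r = mrl μ (k + r)) :=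
  stmt7_general μ hint hcont k rH hrH U hU
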